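/- If X is a Hausdorff space in which arbitrary unions of regular open sets are regular open (an R-space), A ⊆ X is nearly compact relative to X, and p ∉ A, then there exist disjoint regular open sets G and H in X with p ∈ G and A ⊆ H. -/
import Mathlib


def IsRegOpen {X : Type*} [TopologicalSpace X] (A : Set X) : Prop :=
  A = interior (closure A)

/-- `X` is an `R`-space: every union of regular open sets is regular open. -/
def IsRSpace (X : Type*) [TopologicalSpace X] : Prop :=
  ∀ S : Set (Set X), (∀ U ∈ S, IsRegOpen U) → IsRegOpen (⋃₀ S)

/-- `A` is nearly compact relative to `X`: every cover of `A` by open sets of `X`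
admits a finite subfamily whose interiors of closures cover `A`. -/
def NearlyCompactRel {X : Type*} [TopologicalSpace X] (A : Set X) : Prop :=
  ∀ 𝒰 : Set (Set X), (∀ U ∈ 𝒰, IsOpen U) → A ⊆ ⋃₀ 𝒰 →
    ∃ F ⊆ 𝒰, F.Finite ∧ A ⊆ ⋃ U ∈ F, interior (closure U)

lemma isRegOpen_int_cl {X : Type*} [TopologicalSpace X] {U : Set X} (hU : IsOpen U) :
    IsRegOpen (interior (closure U)) := by
  unfold IsRegOpen
  apply le_antisymm
  · exact (isOpen_interior).subset_interior_closure
  · apply interior_mono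
    calc closure (interior (closure U)) ⊆ closure (closure U) := closure_mono interior_subset
    _ = closure U := closure_closure

theorem separate_point_nearlyCompact {X : Type*} [TopologicalSpace X] [T2Space X]
    (hR : IsRSpace X) (A : Set X) (hA : NearlyCompactRel A) (p : X) (hp : p ∉ A) :
    ∃ G H : Set X, IsRegOpen G ∧ IsRegOpen H ∧ p ∈ G ∧ A ⊆ H ∧ Disjoint G H := by
  classical
  set 𝒰 : Set (Set X) := {V | IsOpen V ∧ ∃ U : Set X, IsOpen U ∧ p ∈ U ∧ Disjoint U V} with h𝒰
  have hcov : A ⊆ ⋃₀ 𝒰 := by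
    intro a ha
    obtain ⟨U, V, hUo, hVo, hpU, haV, hUV⟩ := t2_separation (show p ≠ a from fun h => hp (h ▸ ha))
    exact ⟨V, ⟨hVo, U, hUo, hpU, hUV⟩, haV⟩
  obtain ⟨F, hF𝒰, hFfin, hAF⟩ := hA 𝒰 (fun U hU => hU.1) hcov
  -- choose for each V ∈ F an open U ∋ p disjoint from V
  choose! U hUo hpU hUV using fun V (hV : V ∈ 𝒰) => hV.2
  set W : Set X := ⋂ V ∈ F, U V with hW
  have hWo : IsOpen W := hFfin.isOpen_biInter (fun V hV => hUo V (hF𝒰 hV))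
  have hpW : p ∈ W := Set.mem_biInter (fun V hV => hpU V (hF𝒰 hV))
  set G := interior (closure W) with hG
  set S : Set (Set X) := (fun V => interior (closure V)) '' F with hS
  set H := ⋃₀ S with hH
  refine ⟨G, H, isRegOpen_int_cl hWo, ?_, ?_, ?_, ?_⟩
  · exact hR S (by rintro _ ⟨V, hV, rfl⟩; exact isRegOpen_int_cl ((hF𝒰 hV).1))
  · exact interior_maximal subset_closure hWo hpW
  · intro a ha
    obtain ⟨V, hV, haV⟩ := by simpa using hAF ha
    exact ⟨interior (closure V), ⟨V, hV, rfl⟩, haV⟩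
  · rw [Set.disjoint_sUnion_right]
    rintro _ ⟨V, hV, rfl⟩
    -- W disjoint from int cl V
    have h1 : Disjoint W V := (hUV V (hF𝒰 hV)).mono_left (Set.biInter_subset_of_mem hV)
    have h2 : closure V ⊆ Wᶜ :=
      closure_minimal (Set.subset_compl_iff_disjoint_left.2 h1) hWo.isClosed_compl
    have h3 : closure W ⊆ (interior (closure V))ᶜ :=
      closure_minimal (fun x hxW hxV => h2 (interior_subset hxV) hxW)
        isOpen_interior.isClosed_compl
    exact Set.disjoint_left.2 fun x hxG hxV => (interior_subset.trans h3) hxG hxV
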